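/- arXiv:1807.09496 — 3 statements merged into one kernel-verified Lean document; each statement's English description precedes it below -/
import Mathlib

section
/- Let X be a path-connected topological space admitting a finite open cover U₁, …, U_m such that each U_i is path-connected and simply connected and each nonempty intersection U_i ∩ U_j is path-connected. Then the fundamental group π₁(X, x₀) is finitely generated for any x₀ ∈ X. -/
open CategoryTheory Set

attribute [local instance] Path.Homotopic.setoid

namespace Stmt11Aux

variable {X : Type*} [TopologicalSpace X]



private lemma clamp_comm (x a b : ℝ) (hab : a ≤ b) : min (max x a) b = max (min x b) a := by
  simp only [min_def, max_def]
  split_ifs <;> linarith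

private lemma truncate_apply {a b : X} (γ : Path a b) (t₀ t₁ : ℝ) (s : unitInterval) :
    γ.truncate t₀ t₁ s = γ.extend (min (max s t₀) t₁) := rfl

private lemma cast_apply {a b a' b' : X} (p : Path a b) (ha : a' = a) (hb : b' = b)
    (s : unitInterval) : p.cast ha hb s = p s := rfl

private lemma homotopic_of_range_subset {S : Set X} [SimplyConnectedSpace ↥S] {a b : X}
    (p q : Path a b) (hp : ∀ t, p t ∈ S) (hq : ∀ t, q t ∈ S) : p.Homotopic q := by
  have ha : a ∈ S := by have := hp 0; rwa [p.source] at this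
  have hb : b ∈ S := by have := hp 1; rwa [p.target] at this
  let p' : Path (⟨a, ha⟩ : S) ⟨b, hb⟩ :=
    { toFun := fun t => ⟨p t, hp t⟩
      continuous_toFun := p.continuous.subtype_mk _
      source' := Subtype.ext p.source
      target' := Subtype.ext p.target }
  let q' : Path (⟨a, ha⟩ : S) ⟨b, hb⟩ :=
    { toFun := fun t => ⟨q t, hq t⟩
      continuous_toFun := q.continuous.subtype_mk _
      source' := Subtype.ext q.source
      target' := Subtype.ext q.target }
  have h : p'.Homotopic q' := SimplyConnectedSpace.paths_homotopic p' q'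
  have h2 := h.map (f := ⟨Subtype.val, continuous_subtype_val⟩)
  have e1 : p'.map continuous_subtype_val = p := by ext t; rfl
  have e2 : q'.map continuous_subtype_val = q := by ext t; rfl
  rwa [e1, e2] at h2

private lemma homotopic_cast {a b a' b' : X} {p q : Path a b} (h : p.Homotopic q)
    (ha : a' = a) (hb : b' = b) : (p.cast ha hb).Homotopic (q.cast ha hb) := by
  subst ha; subst hb; exact h




private lemma trunc_split {a b : X} (γ : Path a b) {u v : ℝ}
    (hu : 0 ≤ u) (huv : u ≤ v) (hv : v ≤ 1) :
    (γ.truncate u 1).Homotopic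
      (((γ.truncate u v).cast (by rw [min_eq_left (huv.trans hv), min_eq_left huv]) rfl).trans
        ((γ.truncate v 1).cast (by rw [min_eq_left hv]) rfl)) := by
  have h0v : (0:ℝ) ≤ v := hu.trans huv
  have hmem : ∀ s : unitInterval,
      max (min (2 * (s:ℝ)) v) (min (2 * (s:ℝ) - 1) 1) ∈ unitInterval := by
    intro s
    constructor
    · exact le_max_of_le_left (le_min (by linarith [s.2.1]) h0v)
    · exact max_le ((min_le_right _ _).trans hv) (min_le_right _ _)
  set f : unitInterval → unitInterval := fun s => ⟨_, hmem s⟩ with hf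
  have hfc : Continuous f := by
    apply Continuous.subtype_mk
    fun_prop
  have hf0 : f 0 = 0 := by
    apply Subtype.ext
    show max (min (2 * ((0:unitInterval):ℝ)) v) (min (2 * ((0:unitInterval):ℝ) - 1) 1) = 0
    norm_num [min_eq_left h0v]
  have hf1 : f 1 = 1 := by
    apply Subtype.ext
    show max (min (2 * ((1:unitInterval):ℝ)) v) (min (2 * ((1:unitInterval):ℝ) - 1) 1) = 1
    norm_num [min_eq_right (hv.trans (by norm_num : (1:ℝ) ≤ 2)), max_eq_right hv]
  have key : (((γ.truncate u v).cast (by rw [min_eq_left (huv.trans hv), min_eq_left huv]) rfl).trans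
        ((γ.truncate v 1).cast (by rw [min_eq_left hv]) rfl))
      = (γ.truncate u 1).reparam f hfc hf0 hf1 := by
    ext s
    rw [Path.coe_reparam]
    simp only [Path.trans_apply, Function.comp_apply]
    have hs1 := s.2.1
    have hs2 := s.2.2
    split_ifs with h
    · show γ.extend (min (max (2 * (s:ℝ)) u) v) =
        γ.extend (min (max (max (min (2 * (s:ℝ)) v) (min (2 * (s:ℝ) - 1) 1)) u) 1)
      congr 1
      rw [min_eq_left (show 2 * (s:ℝ) - 1 ≤ 1 by linarith),
        max_eq_left (le_min (by linarith) (by linarith [min_le_right (2 * (s:ℝ)) v] :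
          2 * (s:ℝ) - 1 ≤ v)),
        (clamp_comm (2 * (s:ℝ)) u v huv).symm]
      exact (min_eq_left ((min_le_right _ _).trans hv)).symm
    · show γ.extend (min (max (2 * (s:ℝ) - 1) v) 1) =
        γ.extend (min (max (max (min (2 * (s:ℝ)) v) (min (2 * (s:ℝ) - 1) 1)) u) 1)
      congr 1
      rw [min_eq_right (show v ≤ 2 * (s:ℝ) by linarith),
        max_comm v (min (2 * (s:ℝ) - 1) 1), ← clamp_comm _ v 1 hv,
        max_eq_left (le_min (huv.trans (le_max_right _ _)) (huv.trans hv)),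
        min_eq_left (min_le_right _ _)]
  rw [key]
  exact ⟨Path.Homotopy.reparam _ f hfc hf0 hf1⟩




/-- The class of a path as a morphism in the fundamental groupoid. -/
def hcl {a b : X} (p : Path a b) :
    FundamentalGroupoid.mk a ⟶ FundamentalGroupoid.mk b := ⟦p⟧

lemma hcl_eq {a b : X} {p q : Path a b} (h : p.Homotopic q) : hcl p = hcl q :=
  Quotient.sound h

lemma hcl_trans {a b c : X} (p : Path a b) (q : Path b c) :
    hcl (p.trans q) = hcl p ≫ hcl q := by
  rw [FundamentalGroupoid.comp_eq]
  rfl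

lemma hcl_symm_comp {a b : X} (p : Path a b) : hcl p.symm ≫ hcl p = 𝟙 _ := by
  rw [← hcl_trans, FundamentalGroupoid.id_eq_path_refl]
  exact Quotient.sound ⟨(Path.Homotopy.reflSymmTrans p).symm⟩

lemma hcl_comp_symm {a b : X} (p : Path a b) : hcl p ≫ hcl p.symm = 𝟙 _ := by
  rw [← hcl_trans, FundamentalGroupoid.id_eq_path_refl]
  exact Quotient.sound ⟨(Path.Homotopy.reflTransSymm p).symm⟩

lemma hcl_symm_comp_assoc {a b : X} (p : Path a b) {Z : FundamentalGroupoid X}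
    (f : FundamentalGroupoid.mk b ⟶ Z) : hcl p.symm ≫ (hcl p ≫ f) = f := by
  rw [← Category.assoc, hcl_symm_comp, Category.id_comp]

lemma hcl_comp_symm_assoc {a b : X} (p : Path a b) {Z : FundamentalGroupoid X}
    (f : FundamentalGroupoid.mk a ⟶ Z) : hcl p ≫ (hcl p.symm ≫ f) = f := by
  rw [← Category.assoc, hcl_comp_symm, Category.id_comp]

/-- A loop as an element of the fundamental group. -/
def el {x : X} (p : Path x x) : FundamentalGroup X x := hcl p

lemma el_hom {x : X} (p : Path x x) : FundamentalGroup.toArrow (el p) = hcl p := rfl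

lemma el_eq_of_hom {x : X} {p q : Path x x} (h : hcl p = hcl q) : el p = el q :=
  h

lemma el_eq {x : X} {p q : Path x x} (h : p.Homotopic q) : el p = el q :=
  el_eq_of_hom (hcl_eq h)

lemma el_mul {x : X} (p q : Path x x) : el (p.trans q) = el q * el p := by
  show hcl (p.trans q) = hcl p ≫ hcl q
  exact hcl_trans p q

lemma el_one {x : X} : el (Path.refl x) = 1 := by
  show hcl (Path.refl x) = 𝟙 _
  exact (FundamentalGroupoid.id_eq_path_refl (FundamentalGroupoid.mk x)).symm

lemma el_surjective {x : X} (g : FundamentalGroup X x) : ∃ p : Path x x, el p = g := by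
  obtain ⟨p, hp⟩ := Quotient.exists_rep g
  exact ⟨p, hp⟩

lemma el_mul_of_hom {x : X} {L A B : Path x x} (h : hcl L = hcl A ≫ hcl B) :
    el L = el B * el A := by
  show hcl L = hcl A ≫ hcl B
  exact h


end Stmt11Aux

open Stmt11Aux in
example : True := trivial

theorem stmt_11 {X : Type*} [TopologicalSpace X] [PathConnectedSpace X] (x₀ : X)
    (m : ℕ) (U : Fin m → Set X)
    (hopen : ∀ i, IsOpen (U i)) (hcover : ⋃ i, U i = Set.univ)
    (hpc : ∀ i, PathConnectedSpace ↥(U i))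
    (hsc : ∀ i, SimplyConnectedSpace ↥(U i))
    (hint : ∀ i j, (U i ∩ U j).Nonempty → IsPathConnected (U i ∩ U j)) :
    Group.FG (FundamentalGroup X x₀) := by
  classical
  open Stmt11Aux in
  have hUc : ∀ j : Fin m, IsPathConnected (U j) := fun j =>
    isPathConnected_iff_pathConnectedSpace.2 (hpc j)
  -- choose intersection points
  obtain ⟨P, hPmem⟩ : ∃ P : Fin m → Fin m → X,
      ∀ i j, (U i ∩ U j).Nonempty → P i j ∈ U i ∩ U j := by
    refine ⟨fun i j => if h : (U i ∩ U j).Nonempty then h.choose else x₀, fun i j h => ?_⟩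
    simp only [dif_pos h]; exact h.choose_spec
  -- base paths from x₀ to the chosen points
  set sp : ∀ i j : Fin m, Path x₀ (P i j) :=
    fun i j => PathConnectedSpace.somePath x₀ (P i j) with hsp
  -- chosen connecting paths for the generators
  obtain ⟨w1, hw1⟩ : ∃ w1 : ∀ i j k : Fin m, Path (P i j) (P j k),
      ∀ i j k, ((U i ∩ U j).Nonempty ∧ (U j ∩ U k).Nonempty) → ∀ s, w1 i j k s ∈ U j := by
    have : ∀ i j k : Fin m, ∃ w : Path (P i j) (P j k),
        ((U i ∩ U j).Nonempty ∧ (U j ∩ U k).Nonempty) → ∀ s, w s ∈ U j := by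
      intro i j k
      by_cases h : (U i ∩ U j).Nonempty ∧ (U j ∩ U k).Nonempty
      · exact ⟨((hUc j).joinedIn _ (hPmem i j h.1).2 _ (hPmem j k h.2).1).somePath,
          fun _ s => JoinedIn.somePath_mem _ s⟩
      · exact ⟨PathConnectedSpace.somePath _ _, fun hc => absurd hc h⟩
    choose w1 hw1 using this
    exact ⟨w1, hw1⟩
  obtain ⟨w2, hw2⟩ : ∃ w2 : ∀ i j : Fin m, Path x₀ (P i j),
      ∀ i j, (x₀ ∈ U i ∧ (U i ∩ U j).Nonempty) → ∀ s, w2 i j s ∈ U i := by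
    have : ∀ i j : Fin m, ∃ w : Path x₀ (P i j),
        (x₀ ∈ U i ∧ (U i ∩ U j).Nonempty) → ∀ s, w s ∈ U i := by
      intro i j
      by_cases h : x₀ ∈ U i ∧ (U i ∩ U j).Nonempty
      · exact ⟨((hUc i).joinedIn _ h.1 _ (hPmem i j h.2).1).somePath,
          fun _ s => JoinedIn.somePath_mem _ s⟩
      · exact ⟨PathConnectedSpace.somePath _ _, fun hc => absurd hc h⟩
    choose w2 hw2 using this
    exact ⟨w2, hw2⟩
  obtain ⟨w3, hw3⟩ : ∃ w3 : ∀ i j : Fin m, Path (P i j) x₀,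
      ∀ i j, ((U i ∩ U j).Nonempty ∧ x₀ ∈ U j) → ∀ s, w3 i j s ∈ U j := by
    have : ∀ i j : Fin m, ∃ w : Path (P i j) x₀,
        ((U i ∩ U j).Nonempty ∧ x₀ ∈ U j) → ∀ s, w s ∈ U j := by
      intro i j
      by_cases h : (U i ∩ U j).Nonempty ∧ x₀ ∈ U j
      · exact ⟨((hUc j).joinedIn _ (hPmem i j h.1).2 _ h.2).somePath,
          fun _ s => JoinedIn.somePath_mem _ s⟩
      · exact ⟨PathConnectedSpace.somePath _ _, fun hc => absurd hc h⟩
    choose w3 hw3 using this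
    exact ⟨w3, hw3⟩
  -- the finite generating set
  set S : Set (FundamentalGroup X x₀) :=
    (range fun x : Fin m × Fin m × Fin m =>
        el ((sp x.1 x.2.1).trans ((w1 x.1 x.2.1 x.2.2).trans (sp x.2.1 x.2.2).symm))) ∪
      (range fun x : Fin m × Fin m => el ((w2 x.1 x.2).trans (sp x.1 x.2).symm)) ∪
      (range fun x : Fin m × Fin m => el ((sp x.1 x.2).trans (w3 x.1 x.2))) with hS
  rw [Group.fg_iff]
  refine ⟨S, (Subgroup.eq_top_iff' _).2 ?_, (((finite_range _).union (finite_range _)).union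
    (finite_range _))⟩
  intro g
  obtain ⟨γ, rfl⟩ := el_surjective g
  -- membership lemmas for the three generator shapes
  have memS1 : ∀ (i j k : Fin m), (U i ∩ U j).Nonempty → (U j ∩ U k).Nonempty →
      ∀ w : Path (P i j) (P j k), (∀ s, w s ∈ U j) →
      el ((sp i j).trans (w.trans (sp j k).symm)) ∈ Subgroup.closure S := by
    intro i j k hij hjk w hw
    haveI := hsc j
    have hhom : w.Homotopic (w1 i j k) :=
      homotopic_of_range_subset (S := U j) w _ hw (hw1 i j k ⟨hij, hjk⟩)
    have he : el ((sp i j).trans (w.trans (sp j k).symm)) =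
        el ((sp i j).trans ((w1 i j k).trans (sp j k).symm)) :=
      el_eq ((Path.Homotopic.refl _).hcomp (hhom.hcomp (Path.Homotopic.refl _)))
    rw [he]
    exact Subgroup.subset_closure (Set.mem_union_left _ (Set.mem_union_left _ ⟨(i, j, k), rfl⟩))
  have memS2 : ∀ (i j : Fin m), x₀ ∈ U i → (U i ∩ U j).Nonempty →
      ∀ w : Path x₀ (P i j), (∀ s, w s ∈ U i) →
      el (w.trans (sp i j).symm) ∈ Subgroup.closure S := by
    intro i j hx hij w hw
    haveI := hsc i
    have hhom : w.Homotopic (w2 i j) :=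
      homotopic_of_range_subset (S := U i) w _ hw (hw2 i j ⟨hx, hij⟩)
    have he : el (w.trans (sp i j).symm) = el ((w2 i j).trans (sp i j).symm) :=
      el_eq (hhom.hcomp (Path.Homotopic.refl _))
    rw [he]
    exact Subgroup.subset_closure (Set.mem_union_left _ (Set.mem_union_right _ ⟨(i, j), rfl⟩))
  have memS3 : ∀ (i j : Fin m), (U i ∩ U j).Nonempty → x₀ ∈ U j →
      ∀ w : Path (P i j) x₀, (∀ s, w s ∈ U j) →
      el ((sp i j).trans w) ∈ Subgroup.closure S := by
    intro i j hij hx w hw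
    haveI := hsc j
    have hhom : w.Homotopic (w3 i j) :=
      homotopic_of_range_subset (S := U j) w _ hw (hw3 i j ⟨hij, hx⟩)
    have he : el ((sp i j).trans w) = el ((sp i j).trans (w3 i j)) :=
      el_eq ((Path.Homotopic.refl _).hcomp hhom)
    rw [he]
    exact Subgroup.subset_closure (Set.mem_union_right _ ⟨(i, j), rfl⟩)
  -- subdivision of the loop γ
  obtain ⟨t, ht0, htmono, ⟨N, htN⟩, hsub⟩ :=
    exists_monotone_Icc_subset_open_cover_unitInterval
      (c := fun i => (γ : unitInterval → X) ⁻¹' (U i))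
      (fun i => (hopen i).preimage γ.continuous)
      (by
        intro s _
        have hs : γ s ∈ ⋃ i, U i := by rw [hcover]; trivial
        simpa using hs)
  choose a ha using hsub
  set n : ℕ := N + 1 with hn
  have htn : ∀ k, n ≤ k → t k = 1 := fun k hk => htN k (by omega)
  have htk : ∀ k : ℕ, ((t k : ℝ)) ≤ t (k + 1) := fun k =>
    Subtype.coe_le_coe.2 (htmono (Nat.le_succ k))
  set y : ℕ → X := fun k => γ.extend (t k) with hy
  set T : ∀ k : ℕ, Path (y k) x₀ := fun k =>
    (γ.truncate (t k) 1).cast (congrArg γ.extend (min_eq_left (t k).2.2)).symm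
      γ.extend_one.symm with hT
  have hTapp : ∀ k s, T k s = γ.extend (min (max (s : ℝ) (t k)) 1) := fun k s => rfl
  have hTconst : ∀ s, T n s = x₀ := by
    intro s
    rw [hTapp]
    have h1 : ((t n : ℝ)) = 1 := by rw [htn n le_rfl]; rfl
    rw [h1, max_eq_right s.2.2, min_self, γ.extend_one]
  have hyt : ∀ k, y k = γ (t k) := fun k => γ.extend_extends' (t k)
  have hjmem : ∀ k, 1 ≤ k → y k ∈ U (a (k - 1)) ∩ U (a k) := by
    intro k hk
    have hk1 : k - 1 + 1 = k := by omega
    constructor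
    · have hmem : t k ∈ Icc (t (k - 1)) (t (k - 1 + 1)) := ⟨htmono (by omega), by rw [hk1]⟩
      have := ha (k - 1) hmem
      rw [hyt k]; exact this
    · have := ha k ⟨le_rfl, htmono (Nat.le_succ k)⟩
      rw [hyt k]; exact this
  have hne : ∀ k, 1 ≤ k → (U (a (k - 1)) ∩ U (a k)).Nonempty := fun k hk => ⟨y k, hjmem k hk⟩
  have hx0a0 : x₀ ∈ U (a 0) := by
    have hmem : t 0 ∈ Icc (t 0) (t 1) := ⟨le_rfl, htmono (Nat.le_succ 0)⟩
    have := ha 0 hmem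
    rw [Set.mem_preimage] at this
    rwa [ht0, γ.source] at this
  have hx0an : x₀ ∈ U (a n) := by
    have := (hjmem n (by omega)).2
    rwa [hyt n, htn n le_rfl, γ.target] at this
  set seg : ∀ k : ℕ, Path (y k) (y (k + 1)) := fun k =>
    (γ.truncate (t k) (t (k + 1))).cast (congrArg γ.extend (min_eq_left (htk k))).symm rfl
    with hseg
  have hsegmem : ∀ k s, seg k s ∈ U (a k) := by
    intro k s
    show γ.extend (min (max (s : ℝ) (t k)) (t (k + 1))) ∈ U (a k)
    have h1 : ((t k : ℝ)) ≤ min (max (s : ℝ) (t k)) (t (k + 1)) :=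
      le_min (le_max_right _ _) (htk k)
    have h2 : min (max (s : ℝ) (t k)) ((t (k + 1) : ℝ)) ≤ t (k + 1) := min_le_right _ _
    rw [γ.extend_apply ⟨(t k).2.1.trans h1, h2.trans (t (k + 1)).2.2⟩]
    exact ha k ⟨h1, h2⟩
  have hsplit : ∀ k : ℕ, (T k).Homotopic ((seg k).trans (T (k + 1))) := by
    intro k
    have h0 := trunc_split γ (u := (t k : ℝ)) (v := (t (k + 1) : ℝ))
      (t k).2.1 (htk k) (t (k + 1)).2.2
    have h1 := homotopic_cast h0 (congrArg γ.extend (min_eq_left (t k).2.2)).symm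
      γ.extend_one.symm
    convert h1 using 1
    rfl
  -- the initial segment
  set seg0 : Path x₀ (y 1) := (γ.truncate 0 (t 1)).cast
    (by rw [min_eq_left (t 1).2.1, γ.extend_zero]) rfl with hseg0
  have hseg0mem : ∀ s, seg0 s ∈ U (a 0) := by
    intro s
    show γ.extend (min (max (s : ℝ) 0) (t 1)) ∈ U (a 0)
    have h1 : (0 : ℝ) ≤ min (max (s : ℝ) 0) (t 1) :=
      le_min (le_max_right _ _) (t 1).2.1
    have h2 : min (max (s : ℝ) 0) ((t 1 : ℝ)) ≤ t 1 := min_le_right _ _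
    rw [γ.extend_apply ⟨h1, h2.trans (t 1).2.2⟩]
    refine ha 0 ⟨?_, h2⟩
    show ((t 0 : ℝ)) ≤ _
    rw [ht0]
    exact h1
  have hstart : γ.Homotopic (seg0.trans (T 1)) := by
    have e0 : γ = (γ.truncate 0 1).cast
        (by rw [min_eq_left zero_le_one, γ.extend_zero]) γ.extend_one.symm := by
      ext s
      show γ s = γ.extend (min (max (s : ℝ) 0) 1)
      rw [max_eq_left s.2.1, min_eq_left s.2.2, γ.extend_extends' s]
    have h0 := trunc_split γ (u := (0 : ℝ)) (v := (t 1 : ℝ)) le_rfl (t 1).2.1 (t 1).2.2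
    have h1 := homotopic_cast h0 (show x₀ = γ.extend (min (0:ℝ) 1) by
      rw [min_eq_left zero_le_one, γ.extend_zero]) γ.extend_one.symm
    rw [e0]
    convert h1 using 1
    rfl
  -- main downward induction
  have down : ∀ d k, k + d = n → 1 ≤ k →
      ∀ w : Path (P (a (k - 1)) (a k)) (y k), (∀ s, w s ∈ U (a k)) →
      el ((sp (a (k - 1)) (a k)).trans (w.trans (T k))) ∈ Subgroup.closure S := by
    intro d
    induction d with
    | zero =>
      intro k hk hk1 w hw
      have hkn : k = n := by omega
      subst hkn
      refine memS3 (a (n - 1)) (a n) (hne n hk1) hx0an (w.trans (T n)) ?_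
      intro s
      rw [Path.trans_apply]
      split_ifs with h
      · exact hw _
      · rw [hTconst]; exact hx0an
    | succ d ih =>
      intro k hk hk1 w hw
      have hne' : (U (a k) ∩ U (a (k + 1))).Nonempty := hne (k + 1) (by omega)
      have hjy : y (k + 1) ∈ U (a k) ∩ U (a (k + 1)) := hjmem (k + 1) (by omega)
      set δp := ((hint (a k) (a (k + 1)) hne').joinedIn (y (k + 1)) hjy
        (P (a k) (a (k + 1))) (hPmem _ _ hne')).somePath with hδp
      have hδmem : ∀ s, δp s ∈ U (a k) ∩ U (a (k + 1)) := fun s => JoinedIn.somePath_mem _ s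
      have hA : el ((sp (a (k - 1)) (a k)).trans
          ((w.trans ((seg k).trans δp)).trans (sp (a k) (a (k + 1))).symm)) ∈
          Subgroup.closure S := by
        refine memS1 _ _ _ (hne k hk1) hne' _ ?_
        intro s
        rw [Path.trans_apply]
        split_ifs with h
        · exact hw _
        · rw [Path.trans_apply]
          split_ifs with h2
          · exact hsegmem k _
          · exact (hδmem _).1
      have hB : el ((sp (a k) (a (k + 1))).trans (δp.symm.trans (T (k + 1)))) ∈
          Subgroup.closure S := ih (k + 1) (by omega) (by omega) δp.symm (fun s => (hδmem _).2)
      have hE : el ((sp (a (k - 1)) (a k)).trans (w.trans (T k))) =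
          el ((sp (a k) (a (k + 1))).trans (δp.symm.trans (T (k + 1)))) *
          el ((sp (a (k - 1)) (a k)).trans
            ((w.trans ((seg k).trans δp)).trans (sp (a k) (a (k + 1))).symm)) := by
        apply el_mul_of_hom
        rw [hcl_eq (Path.Homotopic.hcomp (Path.Homotopic.refl (sp (a (k - 1)) (a k)))
          (Path.Homotopic.hcomp (Path.Homotopic.refl w) (hsplit k)))]
        simp only [hcl_trans, Category.assoc, hcl_symm_comp_assoc, hcl_comp_symm_assoc]
      rw [hE]
      exact mul_mem hB hA
  -- conclude
  have hne1 : (U (a 0) ∩ U (a 1)).Nonempty := hne 1 le_rfl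
  set δ0 := ((hint (a 0) (a 1) hne1).joinedIn (y 1) (hjmem 1 le_rfl)
    (P (a 0) (a 1)) (hPmem _ _ hne1)).somePath with hδ0
  have hδ0mem : ∀ s, δ0 s ∈ U (a 0) ∩ U (a 1) := fun s => JoinedIn.somePath_mem _ s
  have hA0 : el ((seg0.trans δ0).trans (sp (a 0) (a 1)).symm) ∈ Subgroup.closure S := by
    refine memS2 (a 0) (a 1) hx0a0 hne1 (seg0.trans δ0) ?_
    intro s
    rw [Path.trans_apply]
    split_ifs with h
    · exact hseg0mem _
    · exact (hδ0mem _).1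
  have hB0 : el ((sp (a 0) (a 1)).trans (δ0.symm.trans (T 1))) ∈ Subgroup.closure S :=
    down (n - 1) 1 (by omega) le_rfl δ0.symm (fun s => (hδ0mem _).2)
  have hfin : el γ = el ((sp (a 0) (a 1)).trans (δ0.symm.trans (T 1))) *
      el ((seg0.trans δ0).trans (sp (a 0) (a 1)).symm) := by
    apply el_mul_of_hom
    rw [hcl_eq hstart]
    simp only [hcl_trans, Category.assoc, hcl_symm_comp_assoc, hcl_comp_symm_assoc]
  rw [hfin]
  exact mul_mem hB0 hA0
end

section
/- Let X be a path-connected topological space admitting a countable open cover {U_i}_{i∈ℕ} such that each U_i is path-connected and simply connected and each nonempty intersection U_i ∩ U_j is path-connected. Then π₁(X, x₀) is countable. -/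
open CategoryTheory unitInterval Set
attribute [local instance] Path.Homotopic.setoid

theorem countable_of_closure_eq_top {G : Type*} [Group G] (S : Set G) (hS : S.Countable)
    (h : Subgroup.closure S = ⊤) : Countable G := by
  haveI := hS.to_subtype
  haveI : Countable (FreeGroup S) := by unfold FreeGroup; infer_instance
  have hr : (FreeGroup.lift (Subtype.val : S → G)).range = ⊤ := by
    rw [FreeGroup.range_lift_eq_closure, Subtype.range_val, h]
  exact (MonoidHom.range_eq_top.mp hr).countable

noncomputable section
variable {X : Type*} [TopologicalSpace X]


def pathIn {s : Set X} {a b : X} (p : Path a b) (hp : ∀ t, p t ∈ s)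
    (ha : a ∈ s) (hb : b ∈ s) : Path (⟨a, ha⟩ : s) ⟨b, hb⟩ where
  toFun t := ⟨p t, hp t⟩
  continuous_toFun := p.continuous.subtype_mk _
  source' := Subtype.ext p.source
  target' := Subtype.ext p.target

theorem homotopic_of_sc {s : Set X} (hs : SimplyConnectedSpace s)
    {a b : X} (p q : Path a b) (hp : ∀ t, p t ∈ s) (hq : ∀ t, q t ∈ s) :
    p.Homotopic q := by
  have ha : a ∈ s := p.source ▸ hp 0
  have hb : b ∈ s := p.target ▸ hp 1
  have h := (simply_connected_iff_paths_homotopic'.mp hs).2 (pathIn p hp ha hb) (pathIn q hq ha hb)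
  have h2 := h.map (f := ⟨Subtype.val, continuous_subtype_val⟩)
  have e1 : ((pathIn p hp ha hb).map (ContinuousMap.mk (Subtype.val (p := (· ∈ s)))
      continuous_subtype_val).continuous) = p := by ext t; rfl
  have e2 : ((pathIn q hq ha hb).map (ContinuousMap.mk (Subtype.val (p := (· ∈ s)))
      continuous_subtype_val).continuous) = q := by ext t; rfl
  rwa [e1, e2] at h2

private lemma clamp1 {t₀ t₁ t₂ u : ℝ} (h01 : t₀ ≤ t₁) (h12 : t₁ ≤ t₂) :
    min (max (min u t₁) t₀) t₂ = min (max u t₀) t₁ := by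
  simp only [min_def, max_def]; split_ifs <;> linarith

private lemma clamp2 {t₀ t₁ t₂ u : ℝ} (h01 : t₀ ≤ t₁) :
    min (max (max u t₁) t₀) t₂ = min (max u t₁) t₂ := by
  simp only [min_def, max_def]; split_ifs <;> linarith

theorem truncate_split {a b : X} (γ : Path a b) {t₀ t₁ t₂ : ℝ}
    (h0 : 0 ≤ t₀) (h01 : t₀ ≤ t₁) (h12 : t₁ ≤ t₂) (h2 : t₂ ≤ 1) :
    ((γ.truncateOfLE h01).trans (γ.truncateOfLE h12)).Homotopic
      (γ.truncateOfLE (h01.trans h12)) := by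
  have ht0 : (0:ℝ) ≤ t₁ := h0.trans h01
  have ht1 : t₁ ≤ 1 := h12.trans h2
  set g : ℝ → ℝ := fun r => if r ≤ 1/2 then min (2*r) t₁ else max (2*r-1) t₁ with hg
  have hgc : Continuous g := by
    apply Continuous.if_le (by fun_prop) (by fun_prop) continuous_id continuous_const
    intro r hr
    simp only [id_eq] at hr
    rw [hr]; norm_num
    rw [min_eq_right ht1, max_eq_right ht0]
  have hmem : ∀ t : I, g t ∈ I := by
    intro t
    constructor
    · by_cases h : (t:ℝ) ≤ 1/2 <;> simp only [hg, h, if_true, if_false, le_min_iff, le_max_iff]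
      · exact ⟨mul_nonneg (by norm_num) t.2.1, ht0⟩
      · exact Or.inr ht0
    · by_cases h : (t:ℝ) ≤ 1/2 <;> simp only [hg, h, if_true, if_false, min_le_iff, max_le_iff]
      · exact Or.inr ht1
      · exact ⟨by nlinarith [t.2.2], ht1⟩
  set f : I → I := fun t => ⟨g t, hmem t⟩ with hf
  have hfc : Continuous f := (hgc.comp continuous_subtype_val).subtype_mk _
  have hf0 : f 0 = 0 := by
    ext
    show g 0 = 0
    rw [hg]; norm_num [min_eq_left ht0]
  have hf1 : f 1 = 1 := by
    ext
    show g 1 = 1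
    rw [hg]; norm_num [max_eq_left ht1]
  have key : (γ.truncateOfLE (h01.trans h12)).reparam f hfc hf0 hf1
      = (γ.truncateOfLE h01).trans (γ.truncateOfLE h12) := by
    ext t
    rw [Path.trans_apply]
    simp only [Path.coe_reparam, Function.comp_apply]
    split_ifs with h
    · show γ.extend (min (max (g t) t₀) t₂) = γ.extend (min (max (2*(t:ℝ)) t₀) t₁)
      rw [hg]; simp only [h, if_true]
      rw [clamp1 h01 h12]
    · show γ.extend (min (max (g t) t₀) t₂) = γ.extend (min (max (2*(t:ℝ)-1) t₁) t₂)
      rw [hg]; simp only [h, if_false]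
      rw [clamp2 h01]
  have H : (γ.truncateOfLE (h01.trans h12)).Homotopic
      ((γ.truncateOfLE (h01.trans h12)).reparam f hfc hf0 hf1) :=
    ⟨Path.Homotopy.reparam _ f hfc hf0 hf1⟩
  rw [key] at H
  exact H.symm


variable {x₀ : X} {U : ℕ → Set X}

variable {X : Type*} [TopologicalSpace X] {x₀ : X} {U : ℕ → Set X}

def hQ {a b : X} (γ : Path a b) : FundamentalGroupoid.mk a ⟶ FundamentalGroupoid.mk b := ⟦γ⟧

theorem hQ_comp {a b c : X} (γ : Path a b) (δ : Path b c) : hQ (γ.trans δ) = hQ γ ≫ hQ δ :=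
  rfl

theorem hQ_sound {a b : X} {γ γ' : Path a b} (h : γ.Homotopic γ') : hQ γ = hQ γ' :=
  Quotient.sound h

def asAut (x₀ : X) (f : FundamentalGroupoid.mk x₀ ⟶ FundamentalGroupoid.mk x₀) :
    FundamentalGroup X x₀ :=
  f

theorem asAut_comp (x₀ : X) (f g : FundamentalGroupoid.mk x₀ ⟶ FundamentalGroupoid.mk x₀) :
    asAut x₀ (f ≫ g) = asAut x₀ g * asAut x₀ f := rfl

theorem asAut_inv (x₀ : X) (f : FundamentalGroupoid.mk x₀ ⟶ FundamentalGroupoid.mk x₀) :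
    asAut x₀ (Groupoid.inv f) = (asAut x₀ f)⁻¹ := rfl

section induct

variable (U)
variable (R : ∀ i a, a ∈ U i → (FundamentalGroupoid.mk x₀ ⟶ FundamentalGroupoid.mk a))
variable (H : Subgroup (FundamentalGroup X x₀))

def Good {a b : X} (γ : Path a b) : Prop :=
  ∀ i j (ha : a ∈ U i) (hb : b ∈ U j),
    asAut x₀ (R i a ha ≫ (hQ γ ≫ Groupoid.inv (R j b hb))) ∈ H

variable {U R H}
variable (hB : ∀ i j a (hai : a ∈ U i) (haj : a ∈ U j),
    asAut x₀ (R i a hai ≫ Groupoid.inv (R j a haj)) ∈ H)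
variable (hMid : ∀ i a b (ha : a ∈ U i) (hb : b ∈ U i) (γ : Path a b),
    (∀ t, γ t ∈ U i) → R i a ha ≫ hQ γ = R i b hb)
variable (hcov : ∀ y : X, ∃ k, y ∈ U k)

include hB hMid in
theorem good_of_subset {a b : X} (γ : Path a b) (k : ℕ) (hk : ∀ t, γ t ∈ U k) :
    Good U R H γ := by
  intro i j ha hb
  have hka : a ∈ U k := γ.source ▸ hk 0
  have hkb : b ∈ U k := γ.target ▸ hk 1
  have e : R i a ha ≫ (hQ γ ≫ Groupoid.inv (R j b hb)) =
      (R i a ha ≫ Groupoid.inv (R k a hka)) ≫ (R k b hkb ≫ Groupoid.inv (R j b hb)) := by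
    rw [← hMid k a b hka hkb γ hk]
    simp [Groupoid.inv_eq_inv, Category.assoc]
  rw [e, asAut_comp]
  exact H.mul_mem (hB k j b hkb hb) (hB i k a ha hka)

include hcov in
theorem good_trans {a b d : X} {γ : Path a b} {δ : Path b d}
    (hγ : Good U R H γ) (hδ : Good U R H δ) : Good U R H (γ.trans δ) := by
  intro i j ha hd
  obtain ⟨k, hk⟩ := hcov b
  have e : R i a ha ≫ (hQ (γ.trans δ) ≫ Groupoid.inv (R j d hd)) =
      (R i a ha ≫ (hQ γ ≫ Groupoid.inv (R k b hk))) ≫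
        (R k b hk ≫ (hQ δ ≫ Groupoid.inv (R j d hd))) := by
    rw [hQ_comp]
    simp [Groupoid.inv_eq_inv, Category.assoc]
  rw [e, asAut_comp]
  exact H.mul_mem (hδ k j hk hd) (hγ i k ha hk)

theorem good_homotopic {a b : X} {γ γ' : Path a b} (h : γ.Homotopic γ')
    (hg : Good U R H γ') : Good U R H γ := by
  intro i j ha hb
  rw [hQ_sound h]
  exact hg i j ha hb

theorem good_congr {a b a' b' : X} {γ : Path a b} {γ' : Path a' b'}
    (ha : a = a') (hb : b = b') (h : ∀ t, γ t = γ' t) (hg : Good U R H γ) :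
    Good U R H γ' := by
  subst ha; subst hb
  obtain rfl : γ = γ' := by ext s; exact h s
  exact hg


include hB hMid hcov in
theorem good_loop (hopen : ∀ i, IsOpen (U i)) (γ : Path x₀ x₀) : Good U R H γ := by
  obtain ⟨t, ht0, hmono, ⟨n, htn⟩, hsub⟩ :=
    exists_monotone_Icc_subset_open_cover_unitInterval
      (c := fun i => (γ : I → X) ⁻¹' (U i)) (fun i => (hopen i).preimage γ.continuous)
      (by intro s _; simp only [mem_iUnion, mem_preimage]; exact hcov (γ s))
  have key : ∀ m k, n ≤ k + m →
      Good U R H (γ.truncateOfLE (show ((t k : ℝ)) ≤ 1 from (t k).2.2)) := by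
    intro m
    induction m with
    | zero =>
      intro k hk
      have htk : ((t k : ℝ)) = 1 := by
        rw [htn k (by omega)]; rfl
      obtain ⟨k₀, hk₀⟩ := hcov x₀
      refine good_of_subset hB hMid _ k₀ fun s => ?_
      show γ.extend (min (max ↑s (t k : ℝ)) 1) ∈ U k₀
      rw [htk, max_eq_right s.2.2, min_self, γ.extend_one]
      exact hk₀
    | succ m IH =>
      intro k hk
      have h0 : (0:ℝ) ≤ (t k : ℝ) := (t k).2.1
      have h01 : ((t k : ℝ)) ≤ ((t (k+1) : ℝ)) := Subtype.coe_le_coe.mpr (hmono (Nat.le_succ k))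
      have h12 : ((t (k+1) : ℝ)) ≤ 1 := (t (k+1)).2.2
      have hsp := truncate_split γ h0 h01 h12 le_rfl
      refine good_homotopic hsp.symm ?_
      obtain ⟨i₀, hi₀⟩ := hsub k
      refine good_trans hcov ?_ (IH (k+1) (by omega))
      refine good_of_subset hB hMid _ i₀ fun s => ?_
      show γ.extend (min (max ↑s (t k : ℝ)) ((t (k+1) : ℝ))) ∈ U i₀
      set r : ℝ := min (max ↑s (t k : ℝ)) ((t (k+1) : ℝ)) with hr
      have hr1 : ((t k : ℝ)) ≤ r := le_min (le_max_right _ _) h01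
      have hr2 : r ≤ ((t (k+1) : ℝ)) := min_le_right _ _
      have hrI : r ∈ (Icc (0:ℝ) 1) := ⟨h0.trans hr1, hr2.trans h12⟩
      rw [Path.extend_apply γ hrI]
      exact hi₀ ⟨Subtype.coe_le_coe.mp hr1, Subtype.coe_le_coe.mp hr2⟩
  have P0 := key n 0 (by omega)
  refine good_congr ?_ γ.extend_one ?_ P0
  · show γ.extend ((t 0 : ℝ)) = x₀
    rw [ht0]
    exact γ.extend_zero
  · intro s
    show γ.extend (min (max ↑s ((t 0 : ℝ))) 1) = γ s
    rw [ht0]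
    show γ.extend (min (max ↑s (((0:I) : ℝ))) 1) = γ s
    rw [Icc.coe_zero, max_eq_left s.2.1, min_eq_left s.2.2, Path.extend_extends' γ s]

end induct

theorem mem_of_trans {X : Type*} [TopologicalSpace X] {a b c : X} {s : Set X}
    {p : Path a b} {q : Path b c} (hp : ∀ t, p t ∈ s) (hq : ∀ t, q t ∈ s) (t : I) :
    (p.trans q) t ∈ s := by
  have h : (p.trans q) t ∈ range (p.trans q) := mem_range_self t
  rw [Path.trans_range] at h
  rcases h with ⟨u, hu⟩ | ⟨u, hu⟩
  · exact hu ▸ hp u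
  · exact hu ▸ hq u

end

theorem stmt_12 {X : Type*} [TopologicalSpace X] [PathConnectedSpace X] (x₀ : X)
    (U : ℕ → Set X)
    (hopen : ∀ i, IsOpen (U i)) (hcover : ⋃ i, U i = Set.univ)
    (hpc : ∀ i, PathConnectedSpace ↥(U i))
    (hsc : ∀ i, SimplyConnectedSpace ↥(U i))
    (hint : ∀ i j, (U i ∩ U j).Nonempty → IsPathConnected (U i ∩ U j)) :
    Countable (FundamentalGroup X x₀) := by
  classical
  have hcov : ∀ y : X, ∃ k, y ∈ U k := fun y => mem_iUnion.mp (hcover ▸ mem_univ y)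
  have hne : ∀ i, ∃ a, a ∈ U i := fun i => by
    obtain ⟨⟨a, ha⟩⟩ := (hpc i).nonempty
    exact ⟨a, ha⟩
  choose xi hxi using hne
  let pp : ∀ i, Path x₀ (xi i) := fun i => PathConnectedSpace.somePath x₀ (xi i)
  have ipc : ∀ i, IsPathConnected (U i) := fun i => by
    rw [isPathConnected_iff_pathConnectedSpace]; exact hpc i
  let cc : ∀ i a, a ∈ U i → Path (xi i) a :=
    fun i a ha => ((ipc i).joinedIn (xi i) (hxi i) a ha).somePath
  have hcc : ∀ i a (ha : a ∈ U i) (s : I), cc i a ha s ∈ U i :=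
    fun i a ha s => JoinedIn.somePath_mem _ s
  let R : ∀ i a, a ∈ U i → (FundamentalGroupoid.mk x₀ ⟶ FundamentalGroupoid.mk a) :=
    fun i a ha => hQ (pp i) ≫ hQ (cc i a ha)
  obtain ⟨k₀, hk₀⟩ := hcov x₀
  let gen : ℕ × ℕ → FundamentalGroup X x₀ := fun ij =>
    if h : (U ij.1 ∩ U ij.2).Nonempty then
      asAut x₀ (R ij.1 h.choose h.choose_spec.1 ≫ Groupoid.inv (R ij.2 h.choose h.choose_spec.2))
    else 1
  let ρ : FundamentalGroup X x₀ := asAut x₀ (R k₀ x₀ hk₀)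
  let S : Set (FundamentalGroup X x₀) := Set.range gen ∪ {ρ}
  apply countable_of_closure_eq_top S ((countable_range gen).union (countable_singleton ρ))
  set H := Subgroup.closure S with hH
  -- hMid
  have hMid : ∀ i a b (ha : a ∈ U i) (hb : b ∈ U i) (γ : Path a b),
      (∀ s, γ s ∈ U i) → R i a ha ≫ hQ γ = R i b hb := by
    intro i a b ha hb γ hγ
    show (hQ (pp i) ≫ hQ (cc i a ha)) ≫ hQ γ = hQ (pp i) ≫ hQ (cc i b hb)
    rw [Category.assoc, ← hQ_comp]
    congr 1
    exact hQ_sound (homotopic_of_sc (hsc i) _ _ (mem_of_trans (hcc i a ha) hγ) (hcc i b hb))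
  -- hB
  have hB : ∀ i j a (hai : a ∈ U i) (haj : a ∈ U j),
      asAut x₀ (R i a hai ≫ Groupoid.inv (R j a haj)) ∈ H := by
    intro i j a hai haj
    have hne' : (U i ∩ U j).Nonempty := ⟨a, hai, haj⟩
    have hy : hne'.choose ∈ U i ∩ U j := hne'.choose_spec
    have hw := ((hint i j hne').joinedIn hne'.choose hy a ⟨hai, haj⟩)
    have hwmem : ∀ s, hw.somePath s ∈ U i ∩ U j := fun s => hw.somePath_mem s
    have e1 : R i a hai = R i hne'.choose hy.1 ≫ hQ hw.somePath := by
      show hQ (pp i) ≫ hQ (cc i a hai) =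
        (hQ (pp i) ≫ hQ (cc i hne'.choose hy.1)) ≫ hQ hw.somePath
      rw [Category.assoc, ← hQ_comp (cc i hne'.choose hy.1) hw.somePath, ← hQ_comp, ← hQ_comp]
      exact hQ_sound ((Path.Homotopic.refl (pp i)).hcomp (homotopic_of_sc (hsc i) _ _
        (hcc i a hai) (mem_of_trans (hcc i hne'.choose hy.1) (fun s => (hwmem s).1))))
    have e2 : R j a haj = R j hne'.choose hy.2 ≫ hQ hw.somePath := by
      show hQ (pp j) ≫ hQ (cc j a haj) =
        (hQ (pp j) ≫ hQ (cc j hne'.choose hy.2)) ≫ hQ hw.somePath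
      rw [Category.assoc, ← hQ_comp (cc j hne'.choose hy.2) hw.somePath, ← hQ_comp, ← hQ_comp]
      exact hQ_sound ((Path.Homotopic.refl (pp j)).hcomp (homotopic_of_sc (hsc j) _ _
        (hcc j a haj) (mem_of_trans (hcc j hne'.choose hy.2) (fun s => (hwmem s).2))))
    have e3 : R i a hai ≫ Groupoid.inv (R j a haj) =
        R i hne'.choose hy.1 ≫ Groupoid.inv (R j hne'.choose hy.2) := by
      rw [e1, e2]
      simp [Groupoid.inv_eq_inv]
    rw [e3]
    apply Subgroup.subset_closure
    left
    refine ⟨(i, j), ?_⟩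
    show (if h : (U i ∩ U j).Nonempty then
        asAut x₀ (R i h.choose h.choose_spec.1 ≫ Groupoid.inv (R j h.choose h.choose_spec.2))
      else 1) = _
    rw [dif_pos hne']
  -- conclude
  rw [eq_top_iff]
  rintro α -
  obtain ⟨γ, hγ⟩ := Quotient.exists_rep (FundamentalGroup.toPath α)
  have hg := good_loop (R := R) (H := H) hB hMid hcov hopen γ
  have hmem := hg k₀ k₀ hk₀ hk₀
  have hρ : ρ ∈ H := Subgroup.subset_closure (Or.inr rfl)
  have hα : α = asAut x₀ (hQ γ) := hγ.symm
  have hexp : asAut x₀ (R k₀ x₀ hk₀ ≫ (hQ γ ≫ Groupoid.inv (R k₀ x₀ hk₀)))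
      = (ρ⁻¹ * α) * ρ := by
    rw [asAut_comp, asAut_comp, asAut_inv, hα]
  rw [hexp] at hmem
  have : α = ρ * ((ρ⁻¹ * α) * ρ) * ρ⁻¹ := by group
  rw [this]
  exact H.mul_mem (H.mul_mem hρ hmem) (H.inv_mem hρ)
end

section
/- Let p : X → S be a covering map with X path-connected and simply connected, and S path-connected and locally path-connected. Fix s₀ ∈ S and x₀ ∈ p⁻¹(s₀). Then the map sending a deck transformation φ to the class in π₁(S, s₀) of p ∘ γ̃, where γ̃ is any path in X from x₀ to φ(x₀), is a group isomorphism (or anti-isomorphism, by convention) between the deck transformation group Aut(X/S) and π₁(S, s₀). -/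
open Set Filter Topology unitInterval

attribute [local instance] Path.Homotopic.setoid

/-- The set of deck transformations of `p : X → S`: homeomorphisms `φ` of `X` with `p ∘ φ = p`. -/
def DeckTransformation {X S : Type} [TopologicalSpace X] [TopologicalSpace S] (p : X → S) :=
  {φ : X ≃ₜ X // ∀ x, p (φ x) = p x}

/-- Composition of deck transformations: `(φ.comp ψ) x = φ (ψ x)`. -/
def DeckTransformation.comp {X S : Type} [TopologicalSpace X] [TopologicalSpace S] {p : X → S}
    (φ ψ : DeckTransformation p) : DeckTransformation p :=
  ⟨ψ.1.trans φ.1, fun x => by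
    simp only [Homeomorph.trans_apply]
    rw [φ.2, ψ.2]⟩

noncomputable section
namespace CoveringLift

variable {X S : Type} [TopologicalSpace X] [TopologicalSpace S] {p : X → S}

theorem main_induction {A : Type} [TopologicalSpace A] (hp : IsCoveringMap p)
    (H : C(A × I, S)) (g : A → X) (hg : Continuous g) (hg0 : ∀ a, p (g a) = H (a, 0))
    (N : ℕ) (hNpos : (0:ℝ) < N) {F : ℕ → Type} [∀ k, TopologicalSpace (F k)]
    (T : ∀ k : ℕ, Bundle.Trivialization (F k) p)
    (U : Set A)
    (hU : ∀ a ∈ U, ∀ k : ℕ, k < N → ∀ s : I,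
      (k:ℝ)/N ≤ (s:ℝ) → (s:ℝ) ≤ ((k:ℝ)+1)/N → H (a, s) ∈ (T k).baseSet) :
    ∀ k : ℕ, k ≤ N → ∃ Γ : ↥U × I → X, Continuous Γ ∧
      (∀ a : ↥U, Γ (a, 0) = g a.1) ∧
      ∀ (a : ↥U) (s : I), (s:ℝ) ≤ (k:ℝ)/N → p (Γ (a, s)) = H (a.1, s) := by
  classical
  intro k
  induction k with
  | zero =>
    intro _
    refine ⟨fun q => g q.1.1, hg.comp (continuous_subtype_val.comp continuous_fst),
      fun a => rfl, fun a s hs => ?_⟩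
    have h0 : s = 0 := Subtype.ext (le_antisymm (by simpa using hs) s.2.1)
    rw [h0, hg0]
  | succ k ih =>
    intro hk1
    obtain ⟨Γ, hΓc, hΓ0, hΓp⟩ := ih (Nat.le_of_succ_le hk1)
    have hkN : k < N := hk1
    have hkk1 : (k:ℝ)/N ≤ ((k:ℝ)+1)/N := by gcongr; linarith
    have hukmem : (k:ℝ)/N ∈ I := ⟨by positivity, by
      rw [div_le_one hNpos]; exact_mod_cast hkN.le⟩
    set uk : I := ⟨(k:ℝ)/N, hukmem⟩ with huk
    have hk1N : ((k:ℝ)+1)/N ≤ 1 := by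
      rw [div_le_one hNpos]
      have : ((k:ℕ)+1 : ℝ) ≤ N := by exact_mod_cast hk1
      push_cast at this ⊢; linarith
    -- the clamping map
    set m : I → I := fun s => ⟨min (s:ℝ) (((k:ℝ)+1)/N),
      ⟨le_min s.2.1 (by positivity), (min_le_left _ _).trans s.2.2⟩⟩ with hm
    have hm_cont : Continuous m :=
      Continuous.subtype_mk (continuous_subtype_val.min continuous_const) _
    -- point and sheet at k/N
    set q₀ : ↥U → X := fun a => Γ (a, uk) with hq₀def
    have hq₀cont : Continuous q₀ := hΓc.comp (continuous_id.prodMk continuous_const)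
    have hq₀p : ∀ a : ↥U, p (q₀ a) = H (a.1, uk) := fun a => hΓp a uk le_rfl
    have hq₀base : ∀ a : ↥U, H (a.1, uk) ∈ (T k).baseSet := fun a =>
      hU a.1 a.2 k hkN uk le_rfl hkk1
    have hq₀src : ∀ a : ↥U, q₀ a ∈ (T k).source := fun a =>
      (T k).mem_source.mpr (by rw [hq₀p a]; exact hq₀base a)
    set c : ↥U → F k := fun a => ((T k) (q₀ a)).2 with hcdef
    have hc_cont : Continuous c := by
      have : Continuous fun a : ↥U => (T k) (q₀ a) := by
        refine ((T k).toPartialHomeomorph.continuousOn.comp_continuous hq₀cont ?_)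
        exact hq₀src
      exact continuous_snd.comp this
    -- the chart lift beyond k/N
    set Γ' : ↥U × I → X := fun q =>
      (T k).toPartialHomeomorph.symm (H (q.1.1, m q.2), c q.1) with hΓ'def
    have hbase' : ∀ q : ↥U × I, (k:ℝ)/N ≤ (q.2:ℝ) → H (q.1.1, m q.2) ∈ (T k).baseSet := by
      intro q hq
      refine hU q.1.1 q.1.2 k hkN (m q.2) (le_min hq hkk1) (min_le_right _ _)
    have hmem' : ∀ q : ↥U × I, (k:ℝ)/N ≤ (q.2:ℝ) →
        (H (q.1.1, m q.2), c q.1) ∈ (T k).target := by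
      intro q hq
      rw [(T k).mem_target]
      exact hbase' q hq
    have hΓ'cont : ContinuousOn Γ' {q : ↥U × I | (k:ℝ)/N ≤ (q.2:ℝ)} := by
      refine ContinuousOn.comp ((T k).toPartialHomeomorph.continuousOn_symm) ?_ ?_
      · refine Continuous.continuousOn ?_
        refine Continuous.prodMk ?_ (hc_cont.comp continuous_fst)
        exact H.continuous.comp
          ((continuous_subtype_val.comp continuous_fst).prodMk (hm_cont.comp continuous_snd))
      · intro q hq; exact hmem' q hq
    have hΓ'p : ∀ q : ↥U × I, (k:ℝ)/N ≤ (q.2:ℝ) → p (Γ' q) = H (q.1.1, m q.2) := by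
      intro q hq
      exact (T k).proj_symm_apply (hmem' q hq)
    have hagree : ∀ q : ↥U × I, (q.2:ℝ) = (k:ℝ)/N → Γ q = Γ' q := by
      rintro ⟨a, s⟩ hs
      have hsuk : s = uk := Subtype.ext hs
      have hmuk : m uk = uk := Subtype.ext (min_eq_left hkk1)
      have hpq : H (a.1, uk) = ((T k) (q₀ a)).1 := by
        rw [(T k).coe_fst (hq₀src a), hq₀p a]
      have key : Γ' (a, uk) = q₀ a := by
        show (T k).toPartialHomeomorph.symm (H (a.1, m uk), c a) = q₀ a
        rw [hmuk, hpq]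
        show (T k).toPartialHomeomorph.symm (((T k) (q₀ a)).1, ((T k) (q₀ a)).2) = q₀ a
        rw [Prod.mk.eta]
        exact (T k).toPartialEquiv.left_inv (hq₀src a)
      rw [hsuk]
      exact key.symm
    set Γ'' : ↥U × I → X := fun q => if (q.2:ℝ) ≤ (k:ℝ)/N then Γ q else Γ' q with hΓ''def
    have hΓ''cont : Continuous Γ'' := by
      refine continuous_if_le (continuous_subtype_val.comp continuous_snd) continuous_const
        hΓc.continuousOn (hΓ'cont.mono ?_) ?_
      · intro q hq; exact hq
      · intro q hq; exact hagree q hq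
    refine ⟨Γ'', hΓ''cont, ?_, ?_⟩
    · intro a
      have : ((0:I):ℝ) ≤ (k:ℝ)/N := by positivity
      simp only [hΓ''def, if_pos this]
      exact hΓ0 a
    · rintro a s hs
      by_cases h : (s:ℝ) ≤ (k:ℝ)/N
      · simp only [hΓ''def, if_pos h]
        exact hΓp a s h
      · simp only [hΓ''def, if_neg h]
        push_neg at h
        have h' : (k:ℝ)/N ≤ (s:ℝ) := h.le
        have hs' : (s:ℝ) ≤ ((k:ℝ)+1)/N := by
          have : ((k:ℕ)+1 : ℝ) = (k:ℝ)+1 := by push_cast; ring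
          rw [← this]; exact_mod_cast hs
        have := hΓ'p (a, s) h'
        rw [this]
        have hms : m s = s := Subtype.ext (min_eq_left hs')
        rw [hms]
/-- Chosen trivialization of a covering map at a point. -/
def triv (hp : IsCoveringMap p) (s : S) [Nonempty (p ⁻¹' {s})] : Bundle.Trivialization (p ⁻¹' {s}) p :=
  (hp s).toTrivialization

lemma mem_triv_baseSet (hp : IsCoveringMap p) (s : S) [Nonempty (p ⁻¹' {s})] : s ∈ (triv hp s).baseSet :=
  (hp s).mem_toTrivialization_baseSet

/-- Local (in the parameter) lifting of a parametrized family of paths. -/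
theorem exists_local_lift {A : Type} [TopologicalSpace A] (hp : IsCoveringMap p)
    (H : C(A × I, S)) (g : A → X) (hg : Continuous g) (hg0 : ∀ a, p (g a) = H (a, 0))
    (a₀ : A) :
    ∃ U : Set A, U ∈ 𝓝 a₀ ∧ ∃ Γ : ↥U × I → X, Continuous Γ ∧
      (∀ a : ↥U, Γ (a, 0) = g a.1) ∧ ∀ (a : ↥U) (s : I), p (Γ (a, s)) = H (a.1, s) := by
  classical
  haveI hne : ∀ t : I, Nonempty (p ⁻¹' {H (a₀, t)}) := by
    have hclosed : IsClosed (Set.range p) := by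
      rw [← isOpen_compl_iff, isOpen_iff_forall_mem_open]
      intro s hs
      obtain ⟨_, U, hsU, hU, _, Φ, _⟩ := hp s
      refine ⟨U, fun y hy hyr => ?_, hU, hsU⟩
      obtain ⟨x, hx⟩ := hyr
      have hxU : x ∈ p ⁻¹' U := by rw [Set.mem_preimage, hx]; exact hy
      exact hs ⟨(Φ ⟨x, hxU⟩).2.1, (Φ ⟨x, hxU⟩).2.2⟩
    have hopen : IsOpen (Set.range p) := hp.isOpenMap.isOpen_range
    have hcont : Continuous fun t : I => H (a₀, t) :=
      H.continuous.comp (continuous_const.prodMk continuous_id)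
    have huniv := IsClopen.eq_univ ⟨hclosed.preimage hcont, hopen.preimage hcont⟩
      (⟨0, g a₀, hg0 a₀⟩ : ((fun t : I => H (a₀, t)) ⁻¹' Set.range p).Nonempty)
    intro t
    have ht : t ∈ (fun t : I => H (a₀, t)) ⁻¹' Set.range p := huniv ▸ mem_univ t
    obtain ⟨x, hx⟩ := ht
    exact ⟨⟨x, hx⟩⟩
  -- chart data along the path at `a₀`
  set c : I → Set I := fun t => (fun s => H (a₀, s)) ⁻¹' (triv hp (H (a₀, t))).baseSet with hc
  have hc_open : ∀ t, IsOpen (c t) := fun t =>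
    (triv hp (H (a₀, t))).open_baseSet.preimage (H.continuous.comp (by fun_prop))
  have hc_cover : (univ : Set I) ⊆ ⋃ t, c t := fun t _ =>
    mem_iUnion.mpr ⟨t, mem_triv_baseSet hp _⟩
  obtain ⟨δ, hδ, hball⟩ := lebesgue_number_lemma_of_metric isCompact_univ hc_open hc_cover
  obtain ⟨n, hn⟩ := exists_nat_one_div_lt hδ
  set N : ℕ := n + 1 with hN
  have hNpos : (0:ℝ) < N := by positivity
  have hdiv : (1:ℝ) / N < δ := by exact_mod_cast hn
  -- chart for each subinterval
  have hchoice : ∀ k : ℕ, k < N → ∃ t : I, ∀ s : I,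
      (k:ℝ)/N ≤ (s:ℝ) → (s:ℝ) ≤ ((k:ℝ)+1)/N → H (a₀, s) ∈ (triv hp (H (a₀, t))).baseSet := by
    intro k hk
    have hmem : (k:ℝ)/N ∈ I := by
      constructor
      · positivity
      · rw [div_le_one hNpos]; exact_mod_cast hk.le
    obtain ⟨t, ht⟩ := hball ⟨(k:ℝ)/N, hmem⟩ (mem_univ _)
    refine ⟨t, fun s h1 h2 => ?_⟩
    refine ht ?_
    have : dist s (⟨(k:ℝ)/N, hmem⟩ : I) < δ := by
      rw [Subtype.dist_eq, Real.dist_eq, abs_of_nonneg (by simpa using h1)]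
      have : (s:ℝ) - (k:ℝ)/N ≤ 1/N := by
        rw [sub_le_iff_le_add]
        calc (s:ℝ) ≤ ((k:ℝ)+1)/N := h2
        _ = 1/N + (k:ℝ)/N := by ring
      linarith
    exact this
  choose! t ht using hchoice
  set T : ∀ k : ℕ, Bundle.Trivialization (p ⁻¹' {H (a₀, t k)}) p := fun k => triv hp (H (a₀, t k)) with hT
  -- the neighborhood U of a₀
  set U : Set A := {a : A | ∀ k : ℕ, k < N → ∀ s : I,
      (k:ℝ)/N ≤ (s:ℝ) → (s:ℝ) ≤ ((k:ℝ)+1)/N → H (a, s) ∈ (T k).baseSet} with hU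
  have hUnhds : U ∈ 𝓝 a₀ := by
    have : ∀ᶠ a in 𝓝 a₀, ∀ k ∈ Finset.range N, ∀ s : I,
        (k:ℝ)/N ≤ (s:ℝ) → (s:ℝ) ≤ ((k:ℝ)+1)/N → H (a, s) ∈ (T k).baseSet := by
      rw [Filter.eventually_all_finset]
      intro k hk
      have hK : IsCompact {s : I | (k:ℝ)/N ≤ (s:ℝ) ∧ (s:ℝ) ≤ ((k:ℝ)+1)/N} := by
        have : IsClosed {s : I | (k:ℝ)/N ≤ (s:ℝ) ∧ (s:ℝ) ≤ ((k:ℝ)+1)/N} := by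
          apply IsClosed.inter
          · exact isClosed_le continuous_const continuous_subtype_val
          · exact isClosed_le continuous_subtype_val continuous_const
        exact this.isCompact
      have := hK.eventually_forall_of_forall_eventually (x₀ := a₀)
        (P := fun a s => H (a, s) ∈ (T k).baseSet) ?_
      · filter_upwards [this] with a ha s h1 h2; exact ha s ⟨h1, h2⟩
      · intro s hs
        have : H (a₀, s) ∈ (T k).baseSet := ht k (Finset.mem_range.mp hk) s hs.1 hs.2
        have hopen : IsOpen (H ⁻¹' (T k).baseSet) := (T k).open_baseSet.preimage H.continuous
        exact hopen.eventually_mem this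
    filter_upwards [this] with a ha k hk; exact ha k (Finset.mem_range.mpr hk)
  refine ⟨U, hUnhds, ?_⟩
  obtain ⟨Γ, hΓc, hΓ0, hΓp⟩ := main_induction hp H g hg hg0 N hNpos T U
    (fun a ha k hk s h1 h2 => ha k hk s h1 h2) N le_rfl
  refine ⟨Γ, hΓc, hΓ0, fun a s => ?_⟩
  refine hΓp a s ?_
  rw [div_self hNpos.ne']
  exact s.2.2

end CoveringLift

namespace CoveringLift

variable {X S : Type} [TopologicalSpace X] [TopologicalSpace S] {p : X → S}

theorem exists_path_lift (hp : IsCoveringMap p) (γ : C(I, S)) (x : X) (hx : p x = γ 0) :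
    ∃ Γ : C(I, X), (∀ s, p (Γ s) = γ s) ∧ Γ 0 = x := by
  obtain ⟨U, hU, Γ, hc, h0, hl⟩ := exists_local_lift hp
    (⟨fun q => γ q.2, γ.continuous.comp continuous_snd⟩ : C(Unit × I, S))
    (fun _ => x) continuous_const (fun _ => hx) ()
  have hmem : () ∈ U := mem_of_mem_nhds hU
  exact ⟨⟨fun s => Γ (⟨(), hmem⟩, s), hc.comp (continuous_const.prodMk continuous_id)⟩,
    fun s => hl _ s, h0 _⟩

/-- The lift of a path through a covering map. -/
def liftPath (hp : IsCoveringMap p) (γ : C(I, S)) (x : X) (hx : p x = γ 0) : C(I, X) :=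
  (exists_path_lift hp γ x hx).choose

theorem liftPath_lifts (hp : IsCoveringMap p) (γ : C(I, S)) (x : X) (hx : p x = γ 0) (s : I) :
    p (liftPath hp γ x hx s) = γ s :=
  (exists_path_lift hp γ x hx).choose_spec.1 s

theorem liftPath_zero (hp : IsCoveringMap p) (γ : C(I, S)) (x : X) (hx : p x = γ 0) :
    liftPath hp γ x hx 0 = x :=
  (exists_path_lift hp γ x hx).choose_spec.2

theorem liftPath_unique (hp : IsCoveringMap p) (γ : C(I, S)) (x : X) (hx : p x = γ 0) (Γ : C(I, X))
    (hl : ∀ s, p (Γ s) = γ s) (h0 : Γ 0 = x) : ∀ s, Γ s = liftPath hp γ x hx s := by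
  intro s
  have := hp.eq_of_comp_eq (g₁ := ⇑Γ) (g₂ := ⇑(liftPath hp γ x hx))
    Γ.continuous (liftPath hp γ x hx).continuous
    (funext fun u => by rw [Function.comp_apply, Function.comp_apply, hl u,
      liftPath_lifts hp γ x hx u])
    0 (by rw [h0, liftPath_zero hp γ x hx])
  exact congrFun this s

/-- Monodromy: the endpoints of the lifts of the two end-paths of a homotopy
with fixed endpoints agree. -/
theorem endpoint_eq (hp : IsCoveringMap p) (H : C(I × I, S)) (h0 : ∀ t, H (t, 0) = H (0, 0))
    (h1 : ∀ t, H (t, 1) = H (0, 1)) (x : X) (hx : p x = H (0, 0))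
    (Γ Δ : C(I, X)) (hΓ : ∀ s, p (Γ s) = H (0, s)) (hΔ : ∀ s, p (Δ s) = H (1, s))
    (hΓ0 : Γ 0 = x) (hΔ0 : Δ 0 = x) : Γ 1 = Δ 1 := by
  set Ht : I → C(I, S) := fun t =>
    ⟨fun s => H (t, s), H.continuous.comp (continuous_const.prodMk continuous_id)⟩ with hHt
  have hxt : ∀ t, p x = Ht t 0 := fun t => by rw [hx, ← h0 t]; rfl
  set f : I → X := fun t => liftPath hp (Ht t) x (hxt t) 1 with hf
  have hcont : Continuous f := by
    rw [continuous_iff_continuousAt]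
    intro t₀
    obtain ⟨U, hU, Γ', hc', h0', hl'⟩ := exists_local_lift hp H (fun _ => x)
      continuous_const (fun a => hxt a) t₀
    have key : ∀ a : ↥U, f a.1 = Γ' (a, 1) := fun a =>
      (liftPath_unique hp (Ht a.1) x (hxt a.1)
        ⟨fun s => Γ' (a, s), hc'.comp (continuous_const.prodMk continuous_id)⟩
        (fun s => hl' a s) (h0' a) 1).symm
    have hcU : ContinuousOn f U := by
      rw [continuousOn_iff_continuous_restrict]
      have : U.domRestrict f = fun a : ↥U => Γ' (a, 1) := funext key
      rw [this]
      exact hc'.comp (continuous_id.prodMk continuous_const)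
    exact hcU.continuousAt hU
  haveI : DiscreteTopology ↥(p ⁻¹' {H (0, 1)}) := (hp (H (0, 1))).1
  have hfp : ∀ t, f t ∈ p ⁻¹' {H (0, 1)} := fun t => by
    have : p (f t) = Ht t 1 := liftPath_lifts hp (Ht t) x (hxt t) 1
    have h' : p (f t) = H (0, 1) := by rw [this]; exact h1 t
    exact h'
  have hlc : IsLocallyConstant (fun t => (⟨f t, hfp t⟩ : ↥(p ⁻¹' {H (0, 1)}))) :=
    (IsLocallyConstant.iff_continuous _).mpr (hcont.subtype_mk hfp)
  have hf01 : f 0 = f 1 :=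
    congrArg Subtype.val (hlc.apply_eq_of_preconnectedSpace 0 1)
  have e0 := liftPath_unique hp (Ht 0) x (hxt 0) Γ (fun s => hΓ s) hΓ0 1
  have e1 := liftPath_unique hp (Ht 1) x (hxt 1) Δ (fun s => hΔ s) hΔ0 1
  rw [e0, e1]
  exact hf01

/-- Lifts (starting at the same point) of homotopic paths have the same endpoint. -/
theorem endpoint_eq_of_homotopic (hp : IsCoveringMap p) {s t : S} {γ δ : Path s t} (h : γ.Homotopic δ)
    {x : X} (Γ Δ : C(I, X)) (hΓ : ∀ u, p (Γ u) = γ u) (hΔ : ∀ u, p (Δ u) = δ u)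
    (hΓ0 : Γ 0 = x) (hΔ0 : Δ 0 = x) : Γ 1 = Δ 1 := by
  obtain ⟨F⟩ := h
  refine endpoint_eq hp F.toContinuousMap ?_ ?_ x ?_ Γ Δ ?_ ?_ hΓ0 hΔ0
  · intro u
    exact (F.eq_fst u (by left; rfl)).trans (F.eq_fst 0 (by left; rfl)).symm
  · intro u
    exact (F.eq_fst u (by right; rfl)).trans (F.eq_fst 0 (by right; rfl)).symm
  · rw [show F.toContinuousMap (0, 0) = γ 0 from F.apply_zero 0, ← hΓ 0, hΓ0]
  · intro u; rw [hΓ u]; exact (F.apply_zero u).symm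
  · intro u; rw [hΔ u]; exact (F.apply_one u).symm

end CoveringLift

namespace CoveringLift

variable {X S : Type} [TopologicalSpace X] [TopologicalSpace S] {p : X → S}

theorem locPathConnectedSpace (hp : IsCoveringMap p) [LocallyPathConnectedSpace S] :
    LocallyPathConnectedSpace X := by
  constructor
  intro x
  rw [Filter.hasBasis_self]
  intro tset ht
  obtain ⟨e, hx, _⟩ := hp.isLocalHomeomorph x
  haveI : LocallyPathConnectedSpace ↥e.source :=
    e.isOpenEmbedding_restrict.locPathConnectedSpace
  have hts : Subtype.val ⁻¹' tset ∈ 𝓝 (⟨x, hx⟩ : ↥e.source) :=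
    continuous_subtype_val.continuousAt.preimage_mem_nhds ht
  obtain ⟨s', ⟨hs'n, hs'pc⟩, hs't⟩ :=
    (path_connected_basis (⟨x, hx⟩ : ↥e.source)).mem_iff.mp hts
  refine ⟨Subtype.val '' s', ?_, hs'pc.image continuous_subtype_val, ?_⟩
  · exact e.open_source.isOpenMap_subtype_val.image_mem_nhds hs'n
  · rintro _ ⟨y, hy, rfl⟩; exact hs't hy

section Deck

variable [PathConnectedSpace X] [SimplyConnectedSpace X]

/-- A path pushed down through `p`, as a continuous map. -/
def pm (hp : IsCoveringMap p) {x y : X} (α : Path x y) : C(I, S) :=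
  ⟨fun u => p (α u), hp.continuous.comp α.continuous⟩

theorem pm_start (hp : IsCoveringMap p) {x y x₁ : X} (α : Path x y) (h : p x₁ = p x) :
    p x₁ = pm hp α 0 := by
  rw [h]
  exact (congrArg p α.source).symm

/-- The candidate deck transformation sending `x₀` to `x₁`. -/
def deckFun (hp : IsCoveringMap p) (x₀ x₁ : X) (h : p x₁ = p x₀) : X → X := fun x =>
  liftPath hp (pm hp (PathConnectedSpace.somePath x₀ x)) x₁
    (pm_start hp _ h) 1

theorem deckFun_spec (hp : IsCoveringMap p) (x₀ x₁ : X) (h : p x₁ = p x₀) (x : X)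
    (α : Path x₀ x) (Γ : C(I, X)) (hΓ : ∀ u, p (Γ u) = p (α u)) (hΓ0 : Γ 0 = x₁) :
    deckFun hp x₀ x₁ h x = Γ 1 := by
  have h1 : (PathConnectedSpace.somePath x₀ x).Homotopic α :=
    SimplyConnectedSpace.paths_homotopic _ _
  have hhom := Path.Homotopic.map h1 (⟨p, hp.continuous⟩ : C(X, S))
  exact endpoint_eq_of_homotopic hp hhom (x := x₁)
    (liftPath hp (pm hp (PathConnectedSpace.somePath x₀ x)) x₁ (pm_start hp _ h)) Γ
    (fun u => liftPath_lifts hp _ _ _ u) (fun u => hΓ u)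
    (liftPath_zero hp _ _ _) hΓ0

theorem deckFun_p (hp : IsCoveringMap p) (x₀ x₁ : X) (h : p x₁ = p x₀) (x : X) :
    p (deckFun hp x₀ x₁ h x) = p x :=
  (liftPath_lifts hp _ _ _ 1).trans
    (congrArg p (PathConnectedSpace.somePath x₀ x).target)

theorem deckFun_base (hp : IsCoveringMap p) (x₀ x₁ : X) (h : p x₁ = p x₀) :
    deckFun hp x₀ x₁ h x₀ = x₁ :=
  deckFun_spec hp x₀ x₁ h x₀ (Path.refl x₀) (ContinuousMap.const I x₁)
    (fun u => by rw [ContinuousMap.const_apply, Path.refl_apply]; exact h) rfl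

theorem deckFun_cont (hp : IsCoveringMap p) [LocallyPathConnectedSpace S]
    (x₀ x₁ : X) (h : p x₁ = p x₀) : Continuous (deckFun hp x₀ x₁ h) := by
  haveI : LocallyPathConnectedSpace X := locPathConnectedSpace hp
  rw [continuous_iff_continuousAt]
  intro x
  haveI : Nonempty (p ⁻¹' {p x}) := ⟨⟨x, rfl⟩⟩
  set T := triv hp (p x) with hT
  have hB : p x ∈ T.baseSet := mem_triv_baseSet hp (p x)
  have hpre : p ⁻¹' T.baseSet ∈ 𝓝 x := (T.open_baseSet.preimage hp.continuous).mem_nhds hB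
  obtain ⟨V, ⟨hVn, hVpc⟩, hVsub⟩ := (path_connected_basis x).mem_iff.mp hpre
  have hxV : x ∈ V := mem_of_mem_nhds hVn
  set c₀ := deckFun hp x₀ x₁ h x with hc₀
  have hc₀p : p c₀ = p x := deckFun_p hp x₀ x₁ h x
  have hc₀src : c₀ ∈ T.source := T.mem_source.mpr (by rw [hc₀p]; exact hB)
  set R : X → X := fun y => T.toPartialHomeomorph.symm (p y, (T c₀).2) with hR
  have hRcont : ContinuousOn R V :=
    ContinuousOn.comp T.toPartialHomeomorph.continuousOn_symm
      ((hp.continuous.prodMk continuous_const).continuousOn)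
      (fun y hy => T.mem_target.mpr (hVsub hy))
  have heq : Set.EqOn (deckFun hp x₀ x₁ h) R V := by
    intro y hy
    set J := hVpc.joinedIn x hxV y hy with hJ
    set β := J.somePath with hβ
    have hβV : ∀ u, β u ∈ V := J.somePath_mem
    set α := (PathConnectedSpace.somePath x₀ x).trans β with hα
    set Γα := liftPath hp (pm hp (PathConnectedSpace.somePath x₀ x)) x₁
      (pm_start hp _ h) with hΓα
    have hc₀' : c₀ = Γα 1 := rfl
    have hΔc : Continuous fun u : I => T.toPartialHomeomorph.symm (p (β u), (T c₀).2) :=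
      T.toPartialHomeomorph.continuousOn_symm.comp_continuous
        (((hp.continuous.comp β.continuous).prodMk continuous_const))
        (fun u => T.mem_target.mpr (hVsub (hβV u)))
    set Δ : C(I, X) := ⟨fun u => T.toPartialHomeomorph.symm (p (β u), (T c₀).2), hΔc⟩ with hΔ
    have hΔp : ∀ u, p (Δ u) = p (β u) := fun u =>
      T.proj_symm_apply (T.mem_target.mpr (hVsub (hβV u)))
    have hΔ0 : Δ 0 = c₀ := by
      show T.toPartialHomeomorph.symm (p (β 0), (T c₀).2) = c₀
      have h1 : p (β 0) = (T c₀).1 := by rw [β.source, T.coe_fst hc₀src, hc₀p]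
      rw [h1, Prod.mk.eta]
      exact T.toPartialEquiv.left_inv hc₀src
    set PΓ : Path x₁ (Γα 1) := ⟨Γα, liftPath_zero hp _ _ _, rfl⟩ with hPΓ
    set PΔ : Path (Γα 1) (Δ 1) := ⟨Δ, by show Δ 0 = Γα 1; rw [hΔ0]; exact hc₀', rfl⟩ with hPΔ
    have lift_trans : ∀ u, p ((PΓ.trans PΔ) u) = p (α u) := by
      intro u
      rw [Path.trans_apply, Path.trans_apply]
      split_ifs with hcase
      · exact liftPath_lifts hp (pm hp (PathConnectedSpace.somePath x₀ x)) x₁ (pm_start hp _ h) _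
      · exact hΔp _
    have hspec := deckFun_spec hp x₀ x₁ h y α (PΓ.trans PΔ).toContinuousMap
      (fun u => lift_trans u) ((PΓ.trans PΔ).source)
    have hΔ1 : Δ 1 = R y := by
      show T.toPartialHomeomorph.symm (p (β 1), (T c₀).2) = R y
      rw [β.target]
    calc deckFun hp x₀ x₁ h y = (PΓ.trans PΔ) 1 := hspec
    _ = Δ 1 := (PΓ.trans PΔ).target
    _ = R y := hΔ1
  exact (hRcont.congr heq).continuousAt hVn

theorem deckFun_inv (hp : IsCoveringMap p) [LocallyPathConnectedSpace S]
    (x₀ x₁ : X) (h : p x₁ = p x₀) :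
    ∀ x, deckFun hp x₁ x₀ h.symm (deckFun hp x₀ x₁ h x) = x := by
  have := hp.eq_of_comp_eq
    (g₁ := fun x => deckFun hp x₁ x₀ h.symm (deckFun hp x₀ x₁ h x)) (g₂ := id)
    ((deckFun_cont hp x₁ x₀ h.symm).comp (deckFun_cont hp x₀ x₁ h)) continuous_id
    (funext fun y => by
      simp only [Function.comp_apply, id_eq]
      rw [deckFun_p hp x₁ x₀ h.symm, deckFun_p hp x₀ x₁ h])
    x₀ (by show deckFun hp x₁ x₀ h.symm (deckFun hp x₀ x₁ h x₀) = x₀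
           rw [deckFun_base hp x₀ x₁ h, deckFun_base hp x₁ x₀ h.symm])
  exact fun x => congrFun this x

/-- The deck transformation sending `x₀` to `x₁`. -/
def deck (hp : IsCoveringMap p) [LocallyPathConnectedSpace S] (x₀ x₁ : X) (h : p x₁ = p x₀) :
    DeckTransformation p :=
  ⟨{ toFun := deckFun hp x₀ x₁ h
     invFun := deckFun hp x₁ x₀ h.symm
     left_inv := deckFun_inv hp x₀ x₁ h
     right_inv := deckFun_inv hp x₁ x₀ h.symm
     continuous_toFun := deckFun_cont hp x₀ x₁ h
     continuous_invFun := deckFun_cont hp x₁ x₀ h.symm },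
   fun x => deckFun_p hp x₀ x₁ h x⟩

theorem deck_base (hp : IsCoveringMap p) [LocallyPathConnectedSpace S] (x₀ x₁ : X)
    (h : p x₁ = p x₀) : (deck hp x₀ x₁ h).1 x₀ = x₁ :=
  deckFun_base hp x₀ x₁ h

end Deck

end CoveringLift

open CoveringLift in
theorem stmt_18 {X S : Type} [TopologicalSpace X] [TopologicalSpace S]
    [PathConnectedSpace X] [SimplyConnectedSpace X]
    [PathConnectedSpace S] [LocallyPathConnectedSpace S]
    (p : X → S) (hp : IsCoveringMap p) (x₀ : X) :
    ∃ e : DeckTransformation p ≃ FundamentalGroup S (p x₀),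
      (∀ φ : DeckTransformation p, ∀ γ' : Path x₀ (φ.1 x₀),
        e φ = FundamentalGroup.fromPath (X := TopCat.of S)
          ⟦(γ'.map hp.continuous).cast rfl (φ.2 x₀).symm⟧) ∧
      ((∀ φ ψ : DeckTransformation p, e (φ.comp ψ) = e φ * e ψ) ∨
       (∀ φ ψ : DeckTransformation p, e (φ.comp ψ) = e ψ * e φ)) := by
  classical
  set F : DeckTransformation p → FundamentalGroup S (p x₀) := fun φ =>
    FundamentalGroup.fromPath (X := TopCat.of S)
      ⟦((PathConnectedSpace.somePath x₀ (φ.1 x₀)).map hp.continuous).cast rfl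
        (φ.2 x₀).symm⟧ with hF
  -- independence of the choice of path
  have prop1 : ∀ (φ : DeckTransformation p) (γ' : Path x₀ (φ.1 x₀)),
      F φ = FundamentalGroup.fromPath (X := TopCat.of S)
        ⟦(γ'.map hp.continuous).cast rfl (φ.2 x₀).symm⟧ := by
    intro φ γ'
    have h1 : (PathConnectedSpace.somePath x₀ (φ.1 x₀)).Homotopic γ' :=
      SimplyConnectedSpace.paths_homotopic _ _
    exact congrArg (FundamentalGroup.fromPath (X := TopCat.of S))
      (Quotient.sound (Path.Homotopic.map h1 (⟨p, hp.continuous⟩ : C(X, S))))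
  -- injectivity
  have hinj : Function.Injective F := by
    intro φ ψ hFeq
    have hq : (⟦((PathConnectedSpace.somePath x₀ (φ.1 x₀)).map hp.continuous).cast rfl
          (φ.2 x₀).symm⟧ : Path.Homotopic.Quotient (p x₀) (p x₀)) =
        ⟦((PathConnectedSpace.somePath x₀ (ψ.1 x₀)).map hp.continuous).cast rfl
          (ψ.2 x₀).symm⟧ := hFeq
    have hhom := Quotient.exact hq
    have hend : (PathConnectedSpace.somePath x₀ (φ.1 x₀)) 1 =
        (PathConnectedSpace.somePath x₀ (ψ.1 x₀)) 1 :=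
      endpoint_eq_of_homotopic hp hhom (x := x₀)
        (PathConnectedSpace.somePath x₀ (φ.1 x₀)).toContinuousMap
        (PathConnectedSpace.somePath x₀ (ψ.1 x₀)).toContinuousMap
        (fun u => rfl) (fun u => rfl)
        (PathConnectedSpace.somePath x₀ (φ.1 x₀)).source
        (PathConnectedSpace.somePath x₀ (ψ.1 x₀)).source
    have hend' : φ.1 x₀ = ψ.1 x₀ := by
      rw [← (PathConnectedSpace.somePath x₀ (φ.1 x₀)).target,
        ← (PathConnectedSpace.somePath x₀ (ψ.1 x₀)).target]
      exact hend
    have hfun : ⇑φ.1 = ⇑ψ.1 := hp.eq_of_comp_eq φ.1.continuous ψ.1.continuous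
      (funext fun y => by
        simp only [Function.comp_apply]
        rw [φ.2 y, ψ.2 y]) x₀ hend'
    exact Subtype.ext (Homeomorph.ext (congrFun hfun))
  -- surjectivity
  have hsurj : Function.Surjective F := by
    intro q
    obtain ⟨sg, hsg⟩ := Quotient.exists_rep (FundamentalGroup.toPath (X := TopCat.of S) q)
    have hx : p x₀ = sg.toContinuousMap 0 := sg.source.symm
    set Γ := liftPath hp sg.toContinuousMap x₀ hx with hΓ
    have hpx₁ : p (Γ 1) = p x₀ := (liftPath_lifts hp _ _ _ 1).trans sg.target
    refine ⟨deck hp x₀ (Γ 1) hpx₁, ?_⟩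
    have hφx₀ : (deck hp x₀ (Γ 1) hpx₁).1 x₀ = Γ 1 := deck_base hp x₀ (Γ 1) hpx₁
    set γ' : Path x₀ ((deck hp x₀ (Γ 1) hpx₁).1 x₀) :=
      ⟨Γ, liftPath_zero hp _ _ _, hφx₀.symm⟩ with hγ'
    rw [prop1 _ γ']
    have hpath : ((γ'.map hp.continuous).cast rfl ((deck hp x₀ (Γ 1) hpx₁).2 x₀).symm) = sg :=
      Path.ext (funext fun u => liftPath_lifts hp sg.toContinuousMap x₀ hx u)
    rw [hpath, hsg]
  -- anti-multiplicativity
  have hmul : ∀ φ ψ : DeckTransformation p, F (φ.comp ψ) = F ψ * F φ := by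
    intro φ ψ
    set γφ := PathConnectedSpace.somePath x₀ (φ.1 x₀) with hγφ
    set γψ := PathConnectedSpace.somePath x₀ (ψ.1 x₀) with hγψ
    set γ' : Path x₀ ((φ.comp ψ).1 x₀) := γφ.trans (γψ.map φ.1.continuous) with hγ'
    rw [prop1 _ γ']
    show (⟦(γ'.map hp.continuous).cast rfl ((φ.comp ψ).2 x₀).symm⟧ :
        Path.Homotopic.Quotient (p x₀) (p x₀)) =
      Path.Homotopic.Quotient.trans ⟦(γφ.map hp.continuous).cast rfl (φ.2 x₀).symm⟧
        ⟦(γψ.map hp.continuous).cast rfl (ψ.2 x₀).symm⟧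
    show (⟦(γ'.map hp.continuous).cast rfl ((φ.comp ψ).2 x₀).symm⟧ :
        Path.Homotopic.Quotient (p x₀) (p x₀)) =
      (⟦((γφ.map hp.continuous).cast rfl (φ.2 x₀).symm).trans
        ((γψ.map hp.continuous).cast rfl (ψ.2 x₀).symm)⟧ : Path.Homotopic.Quotient (p x₀) (p x₀))
    refine congrArg _ ?_
    refine Path.ext (funext fun u => ?_)
    show p (γ' u) = (((γφ.map hp.continuous).cast rfl (φ.2 x₀).symm).trans
      ((γψ.map hp.continuous).cast rfl (ψ.2 x₀).symm)) u
    rw [show (γ' : I → X) u = (γφ.trans (γψ.map φ.1.continuous)) u from rfl]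
    rw [Path.trans_apply, Path.trans_apply]
    split_ifs with hcase
    · rfl
    · show p (φ.1 (γψ _)) = p (γψ _)
      exact φ.2 _
  refine ⟨Equiv.ofBijective F ⟨hinj, hsurj⟩, fun φ γ' => prop1 φ γ', Or.inr hmul⟩
end
end
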